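/- arXiv:2112.12681 — 2 statements merged into one kernel-verified Lean document; each statement's English description precedes it below -/
import Mathlib

section
/- Let V be a commutative unital quantale and F̂ a lax extension of F : Set → Set. A κ-ary predicate lifting μ of F is induced by F̂ if and only if μ(f) = μ(1_κ) · F̂f for every V-relation f : X ⇸ κ. -/
/-!
Common framework: commutative unital quantales, `V`-relations, lax extensions,
predicate liftings, Moss liftings and the Kantorovich extension.
-/

universe u

namespace Paper

variable {V : Type u} [CommMonoid V] [CompleteLattice V]

/-- A `V`-relation `X ⇸ Y` is a map `X → Y → V`. -/
abbrev VRel (V : Type u) (X Y : Type u) : Type u := X → Y → V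

/-- Composition of `V`-relations: `(s · r)(x,z) = ⨆ y, r x y ⊗ s y z`. -/
def vcomp {X Y Z : Type u} (s : VRel V Y Z) (r : VRel V X Y) : VRel V X Z :=
  fun x z => ⨆ y, r x y * s y z

/-- The internal hom of the quantale: `hom u w = ⨆ {v | u ⊗ v ≤ w}`. -/
def qhom (u w : V) : V := sSup {v | u * v ≤ w}

/-- The lift `s ⊸ r` of `r : X ⇸ Z` along `s : Y ⇸ Z`. -/
def vlift {X Y Z : Type u} (s : VRel V Y Z) (r : VRel V X Z) : VRel V X Y :=
  fun x y => ⨅ z, qhom (s y z) (r x z)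

/-- The extension `r ⟜ s` of `r : Y ⇸ Z` along `s : Y ⇸ X`. -/
def vext {X Y Z : Type u} (r : VRel V Y Z) (s : VRel V Y X) : VRel V X Z :=
  fun x z => ⨅ y, qhom (s y x) (r y z)

/-- Converse of a `V`-relation. -/
def vconv {X Y : Type u} (r : VRel V X Y) : VRel V Y X := fun y x => r x y

/-- A function `f : X → Y` viewed as a `V`-relation `f_∘ : X ⇸ Y`. -/
def graph {X Y : Type u} (f : X → Y) : VRel V X Y :=
  fun x y => ⨆ _ : f x = y, (1 : V)

/-- The identity `V`-relation `1_X : X ⇸ X`. -/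
def idRel (V : Type u) [CommMonoid V] [CompleteLattice V] (X : Type u) : VRel V X X :=
  fun x y => ⨆ _ : x = y, (1 : V)

/-- The `V`-category structure `[r,s]` on `V`-relations `X ⇸ Y`. -/
def brkt {X Y : Type u} (r s : VRel V X Y) : V :=
  ⨅ (x : X), ⨅ (y : Y), qhom (r x y) (s x y)

/-- A lax extension of a `Set`-functor `F` to `V`-relations. -/
structure LaxExt (V : Type u) [CommMonoid V] [CompleteLattice V]
    (F : Type u → Type u) [Functor F] where
  ext : ∀ {X Y : Type u}, VRel V X Y → VRel V (F X) (F Y)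
  mono : ∀ {X Y : Type u} {r r' : VRel V X Y}, r ≤ r' → ext r ≤ ext r'
  lax_comp : ∀ {X Y Z : Type u} (r : VRel V X Y) (s : VRel V Y Z),
    vcomp (ext s) (ext r) ≤ ext (vcomp s r)
  map_le : ∀ {X Y : Type u} (f : X → Y),
    graph (Functor.map f : F X → F Y) ≤ ext (graph f)
  map_conv_le : ∀ {X Y : Type u} (f : X → Y),
    vconv (graph (Functor.map f : F X → F Y)) ≤ ext (vconv (graph f))

/-- A `V`-enriched lax extension. -/
def LaxExt.Enriched {F : Type u → Type u} [Functor F] (E : LaxExt V F) : Prop :=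
  ∀ (X Y : Type u) (r r' : VRel V X Y), brkt r r' ≤ brkt (E.ext r) (E.ext r')

/-- A `κ`-ary predicate lifting of `F`, viewed relationally: it sends a
`V`-relation `f : X ⇸ κ` naturally to a `V`-relation `μ f : F X ⇸ 1`. -/
structure PredLift (V : Type u) [CommMonoid V] [CompleteLattice V]
    (F : Type u → Type u) [Functor F] (κ : Type u) where
  app : ∀ {X : Type u}, VRel V X κ → VRel V (F X) PUnit
  natural : ∀ {X Y : Type u} (h : X → Y) (g : VRel V Y κ),
    app (vcomp g (graph h)) = vcomp (app g) (graph (Functor.map h : F X → F Y))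

/-- Monotonicity of a predicate lifting. -/
def PredLift.Monotone {F : Type u → Type u} [Functor F] {κ : Type u}
    (μ : PredLift V F κ) : Prop :=
  ∀ {X : Type u} {f f' : VRel V X κ}, f ≤ f' → μ.app f ≤ μ.app f'

/-- `V`-enrichment of a predicate lifting. -/
def PredLift.Enriched {F : Type u → Type u} [Functor F] {κ : Type u}
    (μ : PredLift V F κ) : Prop :=
  ∀ (X : Type u) (f f' : VRel V X κ), brkt f f' ≤ brkt (μ.app f) (μ.app f')

/-- A predicate lifting is induced by a lax extension `E` if `μ f = 𝔯 · E f`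
for some `𝔯 : F κ ⇸ 1`. -/
def PredLift.InducedBy {F : Type u → Type u} [Functor F] {κ : Type u}
    (μ : PredLift V F κ) (E : LaxExt V F) : Prop :=
  ∃ rr : VRel V (F κ) PUnit, ∀ (X : Type u) (f : VRel V X κ),
    μ.app f = vcomp rr (E.ext f)

/-- The (underlying assignment of the) Moss lifting `μ^𝔨` of a lax extension,
determined by an element `𝔨 ∈ F κ`: `μ^𝔨 f = (𝔨_∘)° · E f`. -/
def mossApp {F : Type u → Type u} [Functor F] (E : LaxExt V F) {κ : Type u}
    (k : F κ) (X : Type u) (f : VRel V X κ) : VRel V (F X) PUnit :=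
  vcomp (vconv (graph (fun _ : PUnit => k))) (E.ext f)

/-- The Kantorovich extension of a `κ`-ary predicate-lifting assignment. -/
def kant {F : Type u → Type u} [Functor F] {κ : Type u}
    (μ : ∀ (X : Type u), VRel V X κ → VRel V (F X) PUnit)
    {X Y : Type u} (r : VRel V X Y) : VRel V (F X) (F Y) :=
  ⨅ g : VRel V Y κ, vlift (μ Y g) (μ X (vcomp g r))

/-- The Kantorovich extension of a predicate lifting. -/
def PredLift.kant {F : Type u → Type u} [Functor F] {κ : Type u}
    (μ : PredLift V F κ) {X Y : Type u} (r : VRel V X Y) : VRel V (F X) (F Y) :=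
  Paper.kant (fun _ g => μ.app g) r

/-- The evaluation `V`-relation `ev_κ : V^κ ⇸ κ`. -/
def evRel (V : Type u) [CommMonoid V] [CompleteLattice V] (κ : Type u) :
    VRel V (κ → V) κ :=
  fun φ i => φ i

end Paper

section Aux
open Paper IsQuantale

variable {V : Type u} [CommMonoid V] [CompleteLattice V] [IsQuantale V]

lemma mul_bot' (x : V) : x * (⊥ : V) = ⊥ := by
  rw [← sSup_empty, mul_sSup_distrib]; simp

lemma vcomp_assoc' {X Y Z W : Type u} (t : VRel V Z W) (s : VRel V Y Z) (r : VRel V X Y) :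
    vcomp (vcomp t s) r = vcomp t (vcomp s r) := by
  funext x w
  simp only [vcomp, Quantale.mul_iSup_distrib, Quantale.iSup_mul_distrib]
  rw [iSup_comm]
  exact iSup_congr fun z => iSup_congr fun y => (mul_assoc _ _ _).symm

lemma vcomp_id_left {X Y : Type u} (r : VRel V X Y) : vcomp (Paper.idRel V Y) r = r := by
  funext x y
  apply le_antisymm
  · refine iSup_le fun z => ?_
    rcases eq_or_ne z y with h | h
    · subst h; simp [Paper.idRel]
    · simp [Paper.idRel, h, mul_bot']
  · calc r x y = r x y * Paper.idRel V Y y y := by simp [Paper.idRel]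
      _ ≤ _ := le_iSup (fun z => r x z * Paper.idRel V Y z y) y

lemma vcomp_le_vcomp {X Y Z : Type u} {s s' : VRel V Y Z} {r r' : VRel V X Y}
    (hs : s ≤ s') (hr : r ≤ r') : vcomp s r ≤ vcomp s' r' := by
  intro x z
  exact iSup_mono fun y => mul_le_mul' (hr x y) (hs y z)

lemma idRel_le_ext {F : Type u → Type u} [Functor F] [LawfulFunctor F]
    (E : LaxExt V F) (X : Type u) : Paper.idRel V (F X) ≤ E.ext (Paper.idRel V X) := by
  have h := E.map_le (id : X → X)
  have h1 : graph (V := V) (Functor.map (id : X → X) : F X → F X) = Paper.idRel V (F X) := by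
    funext a b; simp [graph, Paper.idRel, id_map']
  have h2 : graph (V := V) (id : X → X) = Paper.idRel V X := by
    funext a b; rfl
  rw [h1, h2] at h
  exact h
end Aux

open Paper in
/-- A predicate lifting `μ` is induced by a lax extension `F̂`
if and only if `μ f = μ 1_κ · F̂ f` for every `V`-relation `f : X ⇸ κ`. -/
theorem induced_iff_det_by_id {V : Type u} [CommMonoid V] [CompleteLattice V] [IsQuantale V]
    {F : Type u → Type u} [Functor F] [LawfulFunctor F]
    (E : LaxExt V F) {κ : Type u} (μ : PredLift V F κ) :
    μ.InducedBy E ↔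
      ∀ (X : Type u) (f : VRel V X κ), μ.app f = vcomp (μ.app (idRel V κ)) (E.ext f) := by
  constructor
  · rintro ⟨rr, hrr⟩ X f
    have hid := hrr κ (idRel V κ)
    have h1 : vcomp (μ.app (idRel V κ)) (E.ext f)
        = vcomp rr (vcomp (E.ext (idRel V κ)) (E.ext f)) := by
      rw [hid, vcomp_assoc']
    apply le_antisymm
    · rw [hrr X f, h1]
      refine vcomp_le_vcomp (le_refl rr) ?_
      calc E.ext f = vcomp (idRel V (F κ)) (E.ext f) := (vcomp_id_left _).symm
        _ ≤ vcomp (E.ext (idRel V κ)) (E.ext f) :=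
            vcomp_le_vcomp (idRel_le_ext E κ) le_rfl
    · rw [hrr X f, h1]
      refine vcomp_le_vcomp (le_refl rr) ?_
      refine le_trans (E.lax_comp f (idRel V κ)) ?_
      rw [vcomp_id_left]
  · intro h
    exact ⟨μ.app (idRel V κ), h⟩
end

section
/- Let V be a commutative unital quantale and F̂ a lax extension of F : Set → Set. Then F̂ is represented by the class M of all of its Moss liftings: for every V-relation r : X ⇸ Y, F̂r = ⨅_{μ ∈ M} F̂^μ r, where the infimum ranges over all cardinals κ and all Moss liftings μ^𝔨 with 𝔨 ∈ Fκ. -/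
/-!
Common framework: commutative unital quantales, `V`-relations, lax extensions,
predicate liftings, Moss liftings and the Kantorovich extension.
-/

universe u

namespace Paper

variable {V : Type u} [CommMonoid V] [CompleteLattice V] [IsQuantale V]

lemma q_mul_bot (u : V) : u * (⊥ : V) = ⊥ := by
  have := mul_sSup_distrib (x := u) (s := (∅ : Set V))
  simpa using this

lemma q_mul_le_mul_left {u u' : V} (h : u ≤ u') (v : V) : u * v ≤ u' * v :=
  mul_le_mul_left h v

lemma q_mul_le_mul_right (u : V) {v v' : V} (h : v ≤ v') : u * v ≤ u * v' :=
  mul_le_mul_right h u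

lemma le_qhom_iff {u v w : V} : v ≤ qhom u w ↔ u * v ≤ w := by
  constructor
  · intro h
    calc u * v ≤ u * qhom u w := q_mul_le_mul_right u h
      _ ≤ w := by
        rw [qhom, mul_sSup_distrib]
        exact iSup₂_le fun y hy => hy
  · intro h
    exact le_sSup h

lemma qhom_le_self {u w : V} (h : (1 : V) ≤ u) : qhom u w ≤ w := by
  refine sSup_le fun v hv => ?_
  calc v = 1 * v := (one_mul v).symm
    _ ≤ u * v := q_mul_le_mul_left h v
    _ ≤ w := hv

lemma mossApp_eval {F : Type u → Type u} [Functor F] (E : LaxExt V F) {κ : Type u}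
    (k : F κ) (X : Type u) (f : VRel V X κ) (a : F X) (p : PUnit) :
    mossApp E k X f a p = E.ext f a k := by
  simp only [mossApp, vcomp, vconv, graph]
  apply le_antisymm
  · refine iSup_le fun c => ?_
    rcases eq_or_ne k c with h | h
    · subst h; simp
    · simp [h, q_mul_bot]
  · refine le_trans ?_ (le_iSup _ k)
    simp

lemma vcomp_idRel {X Y : Type u} (r : VRel V X Y) : vcomp (idRel V Y) r = r := by
  funext x z
  simp only [vcomp, idRel]
  apply le_antisymm
  · refine iSup_le fun y => ?_
    rcases eq_or_ne y z with h | h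
    · subst h; simp
    · simp [h, q_mul_bot]
  · refine le_trans ?_ (le_iSup _ z)
    simp

lemma one_le_ext_idRel {F : Type u → Type u} [Functor F] [LawfulFunctor F]
    (E : LaxExt V F) {Y : Type u} (b : F Y) : (1 : V) ≤ E.ext (idRel V Y) b b := by
  have hg : (graph (id : Y → Y) : VRel V Y Y) = idRel V Y := rfl
  have h := E.map_le (id : Y → Y)
  rw [hg] at h
  refine le_trans ?_ (h b b)
  simp only [graph]
  have hid : (Functor.map (id : Y → Y) : F Y → F Y) b = b := id_map b
  exact le_iSup_of_le hid le_rfl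

end Paper

open Paper in
/-- Every lax extension is represented by the class of all of
its Moss liftings: `F̂ r = ⨅_{κ, 𝔨 ∈ Fκ} F̂^{μ^𝔨} r`. -/
theorem laxext_represented_by_moss_liftings {V : Type u} [CommMonoid V] [CompleteLattice V]
    [IsQuantale V] {F : Type u → Type u} [Functor F] [LawfulFunctor F]
    (E : LaxExt V F) (X Y : Type u) (r : VRel V X Y) :
    E.ext r = ⨅ (κ : Type u) (k : F κ), kant (mossApp E k) r := by
  apply le_antisymm
  · refine le_iInf fun κ => le_iInf fun k => le_iInf fun g => ?_
    intro a b
    refine le_iInf fun z => ?_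
    rw [mossApp_eval, mossApp_eval, le_qhom_iff]
    refine le_trans ?_ (E.lax_comp r g a k)
    rw [mul_comm]
    exact le_iSup (fun b' => E.ext r a b' * E.ext g b' k) b
  · intro a b
    have h1 : (⨅ (κ : Type u) (k : F κ), kant (mossApp E k) r) ≤ kant (mossApp E b) r :=
      iInf₂_le Y b
    refine le_trans (h1 a b) ?_
    have h2 : kant (mossApp E b) r ≤
        vlift (mossApp E b Y (idRel V Y)) (mossApp E b X (vcomp (idRel V Y) r)) :=
      iInf_le _ (idRel V Y)
    refine le_trans (h2 a b) ?_
    refine le_trans (iInf_le _ PUnit.unit) ?_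
    rw [mossApp_eval, mossApp_eval, vcomp_idRel]
    exact qhom_le_self (one_le_ext_idRel E b)
end
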